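/- arXiv:1403.5942 — 8 statements merged into one kernel-verified Lean document; each statement's English description precedes it below -/
import Mathlib

section
/- For integers k ≥ 1 and n ≥ 1, the central (2k+1)-nomial coefficient M^{(2k,n)} (the coefficient of x^{kn} in (1 + x + x^2 + ... + x^{2k})^n) equals (1/(2kn+1)) · ((2k+1)^n + Σ_{l=1}^{2kn} (sin((2k+1)lπ/(2kn+1)) / sin(lπ/(2kn+1)))^n). -/
open Real Finset Polynomial
section aux
open Complex Finset Polynomial

lemma dft_coeff (N : ℕ) (hN : 0 < N) (Q : ℂ[X]) (hd : Q.natDegree < N) (m : ℕ) (hm : m < N) :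
    (N : ℂ) * Q.coeff m
      = ∑ l ∈ range N, Q.eval (Complex.exp (2 * Real.pi * Complex.I / N) ^ l)
          / (Complex.exp (2 * Real.pi * Complex.I / N) ^ l) ^ m := by
  set ζ := Complex.exp (2 * Real.pi * Complex.I / N) with hζ
  have hprim : IsPrimitiveRoot ζ N := Complex.isPrimitiveRoot_exp N hN.ne'
  have hζ0 : ζ ≠ 0 := Complex.exp_ne_zero _
  have heval : ∀ l : ℕ, Q.eval (ζ ^ l) = ∑ j ∈ range N, Q.coeff j * (ζ ^ l) ^ j := fun l =>
    Q.eval_eq_sum_range' hd _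
  calc (N : ℂ) * Q.coeff m
      = ∑ j ∈ range N, Q.coeff j * (if j = m then (N : ℂ) else 0) := by
        rw [Finset.sum_eq_single m]
        · simp [mul_comm]
        · intro b _ hb; simp [hb]
        · intro h; exact absurd (Finset.mem_range.2 hm) h
    _ = ∑ j ∈ range N, Q.coeff j * ∑ l ∈ range N, (ζ ^ ((j : ℤ) - m)) ^ l := by
        refine Finset.sum_congr rfl fun j hj => ?_
        congr 1
        rcases eq_or_ne j m with rfl | hjm
        · simp
        · rw [if_neg hjm]
          have hz1 : ζ ^ ((j : ℤ) - m) ≠ 1 := by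
            intro h
            have := (hprim.zpow_eq_one_iff_dvd _).1 h
            have hjN := Finset.mem_range.1 hj
            rcases this with ⟨c, hc⟩
            have : (j : ℤ) - m = 0 := by
              rcases lt_trichotomy c 0 with h1 | h1 | h1
              · nlinarith [Int.ofNat_nonneg j, Int.ofNat_nonneg m,
                  (by exact_mod_cast hm : (m : ℤ) < N), (by exact_mod_cast hjN : (j : ℤ) < N)]
              · simp [hc, h1]
              · nlinarith [(by exact_mod_cast hm : (m : ℤ) < N),
                  (by exact_mod_cast hjN : (j : ℤ) < N), Int.ofNat_nonneg j, Int.ofNat_nonneg m]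
            exact hjm (by exact_mod_cast sub_eq_zero.mp this)
          have hN1 : (ζ ^ ((j : ℤ) - m)) ^ N = 1 := by
            rw [← zpow_natCast, ← zpow_mul, mul_comm, zpow_mul, zpow_natCast, hprim.pow_eq_one,
              one_zpow]
          symm
          rw [geom_sum_eq hz1, hN1]
          simp
    _ = ∑ l ∈ range N, Q.eval (ζ ^ l) / (ζ ^ l) ^ m := by
        simp_rw [Finset.mul_sum]
        rw [Finset.sum_comm]
        refine Finset.sum_congr rfl fun l _ => ?_
        rw [heval l, Finset.sum_div]
        refine Finset.sum_congr rfl fun j _ => ?_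
        rw [div_eq_mul_inv, mul_assoc]
        congr 1
        rw [← zpow_natCast ζ l, ← zpow_natCast (ζ ^ (l:ℤ)) j, ← zpow_natCast (ζ ^ (l:ℤ)) m,
          ← zpow_mul, ← zpow_mul, ← zpow_neg, ← zpow_add₀ hζ0, ← zpow_natCast _ l, ← zpow_mul]
        congr 1
        ring


lemma exp_sub_exp (θ : ℝ) (m : ℕ) : Complex.exp (θ * Complex.I) ^ m
    - (Complex.exp (θ * Complex.I) ^ m)⁻¹ = 2 * Complex.I * Complex.sin (m * θ) := by
  rw [← Complex.exp_nat_mul, ← Complex.exp_neg, Complex.sin]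
  ring_nf
  rw [Complex.I_sq]
  ring_nf

lemma dirichlet_ratio (k : ℕ) (θ : ℝ) (hs : Real.sin θ ≠ 0) :
    (∑ i ∈ range (2 * k + 1), Complex.exp (2 * θ * Complex.I) ^ i)
        / (Complex.exp (2 * θ * Complex.I) ^ k)
      = ((Real.sin ((2 * k + 1) * θ) / Real.sin θ : ℝ) : ℂ) := by
  set u := Complex.exp (θ * Complex.I) with hu
  have hu0 : u ≠ 0 := Complex.exp_ne_zero _
  have hz : Complex.exp (2 * θ * Complex.I) = u ^ 2 := by
    rw [hu, ← Complex.exp_nat_mul]; ring_nf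
  have hcs : (Real.sin θ : ℂ) ≠ 0 := Complex.ofReal_ne_zero.2 hs
  have hsin : Complex.sin (θ : ℂ) ≠ 0 := by rwa [← Complex.ofReal_sin]
  have A1 : u - u⁻¹ = 2 * Complex.I * Complex.sin θ := by
    simpa using exp_sub_exp θ 1
  have A2 : u ^ (2 * k + 1) - (u ^ (2 * k + 1))⁻¹
      = 2 * Complex.I * Complex.sin ((2 * k + 1) * θ) := by
    simpa using exp_sub_exp θ (2 * k + 1)
  set S := ∑ i ∈ range (2 * k + 1), Complex.exp (2 * θ * Complex.I) ^ i with hS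
  have key : S * (2 * Complex.I * Complex.sin θ) * u
      = 2 * Complex.I * Complex.sin ((2 * k + 1) * θ) * u ^ (2 * k + 1) := by
    have G := geom_sum_mul (Complex.exp (2 * θ * Complex.I)) (2 * k + 1)
    rw [← hS] at G
    calc S * (2 * Complex.I * Complex.sin θ) * u
        = S * ((u - u⁻¹) * u) := by rw [A1]; ring
      _ = S * (Complex.exp (2 * θ * Complex.I) - 1) := by
          congr 1; rw [hz]; field_simp
      _ = Complex.exp (2 * θ * Complex.I) ^ (2 * k + 1) - 1 := G
      _ = (u ^ (2 * k + 1) - (u ^ (2 * k + 1))⁻¹) * u ^ (2 * k + 1) := by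
          rw [hz, ← pow_mul]; field_simp; ring
      _ = 2 * Complex.I * Complex.sin ((2 * k + 1) * θ) * u ^ (2 * k + 1) := by rw [A2]
  have hmain : S * Complex.sin (θ : ℂ) = Complex.sin (((2 * k + 1 : ℕ) : ℂ) * θ)
      * Complex.exp (2 * θ * Complex.I) ^ k := by
    have h2Iu : (2 : ℂ) * Complex.I * u ≠ 0 := by
      simp [Complex.I_ne_zero, hu0]
    apply mul_right_cancel₀ h2Iu
    rw [hz, ← pow_mul]
    push_cast at key ⊢
    linear_combination key
  rw [div_eq_iff (pow_ne_zero _ (Complex.exp_ne_zero _)), Complex.ofReal_div,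
    Complex.ofReal_sin, Complex.ofReal_sin]
  push_cast at hmain ⊢
  rw [div_mul_eq_mul_div, eq_div_iff hsin]
  linear_combination hmain

end aux

theorem central_multinomial_sin_formula (k n : ℕ) (hk : 1 ≤ k) (hn : 1 ≤ n) :
    ((((∑ i ∈ Finset.range (2 * k + 1), (X : ℤ[X]) ^ i) ^ n).coeff (k * n) : ℝ)) =
      (1 / (2 * k * n + 1)) *
        ((2 * k + 1) ^ n +
          ∑ l ∈ Finset.Icc 1 (2 * k * n),
            (Real.sin ((2 * k + 1) * l * Real.pi / (2 * k * n + 1)) /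
              Real.sin (l * Real.pi / (2 * k * n + 1))) ^ n) := by
  set N := 2 * k * n + 1 with hN
  have hN0 : 0 < N := Nat.succ_pos _
  set P : ℤ[X] := ∑ i ∈ Finset.range (2 * k + 1), (X : ℤ[X]) ^ i with hP
  set Q : ℂ[X] := (P ^ n).map (Int.castRingHom ℂ) with hQ
  have hQd : Q.natDegree < N := by
    have h1 : P.natDegree ≤ 2 * k := by
      apply Polynomial.natDegree_sum_le_of_forall_le
      intro i hi
      simpa using Nat.le_of_lt_succ (Finset.mem_range.1 hi)
    have e1 : n * (2 * k) = 2 * k * n := by ring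
    calc Q.natDegree ≤ (P ^ n).natDegree := Polynomial.natDegree_map_le
      _ = n * P.natDegree := Polynomial.natDegree_pow _ _
      _ ≤ n * (2 * k) := Nat.mul_le_mul_left _ h1
      _ < N := by omega
  have hm : k * n < N := by
    have e2 : 2 * k * n = k * n + k * n := by ring
    omega
  have hdft := dft_coeff N hN0 Q hQd (k * n) hm
  set ζ := Complex.exp (2 * Real.pi * Complex.I / N) with hζ
  have hζprim : IsPrimitiveRoot ζ N := Complex.isPrimitiveRoot_exp N hN0.ne'
  -- split off l = 0
  have hsplit : Finset.range N = insert 0 (Finset.Icc 1 (2 * k * n)) := by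
    ext x; simp [hN]; omega
  rw [hsplit, Finset.sum_insert (by simp)] at hdft
  -- l = 0 term
  have hPev : ∀ x : ℂ, Polynomial.eval x (P.map (Int.castRingHom ℂ))
      = ∑ i ∈ Finset.range (2 * k + 1), x ^ i := by
    intro x
    simp [hP, Polynomial.map_sum, Polynomial.map_pow, Polynomial.eval_finset_sum]
  have hQev : ∀ x : ℂ, Polynomial.eval x Q
      = (∑ i ∈ Finset.range (2 * k + 1), x ^ i) ^ n := by
    intro x
    rw [hQ, Polynomial.map_pow, Polynomial.eval_pow, hPev]
  have h0 : Polynomial.eval (ζ ^ 0) Q / (ζ ^ 0) ^ (k * n) = ((2 * k + 1 : ℕ) : ℂ) ^ n := by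
    rw [pow_zero, hQev]
    simp
  rw [h0] at hdft
  -- other terms
  have hterm : ∀ l ∈ Finset.Icc 1 (2 * k * n),
      Polynomial.eval (ζ ^ l) Q / (ζ ^ l) ^ (k * n)
        = ((Real.sin ((2 * k + 1) * l * Real.pi / (2 * k * n + 1)) /
              Real.sin (l * Real.pi / (2 * k * n + 1)) : ℝ) : ℂ) ^ n := by
    intro l hl
    obtain ⟨hl1, hl2⟩ := Finset.mem_Icc.1 hl
    set θ : ℝ := l * Real.pi / N with hθ
    have hζl : ζ ^ l = Complex.exp (2 * θ * Complex.I) := by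
      rw [hζ, ← Complex.exp_nat_mul]
      congr 1
      push_cast [hθ, hN]
      have h1 : ((N : ℕ) : ℂ) ≠ 0 := Nat.cast_ne_zero.2 hN0.ne'
      push_cast [hN] at h1
      field_simp
    have hθpos : 0 < θ := by
      rw [hθ]
      apply div_pos (by positivity) (by positivity)
    have hθlt : θ < Real.pi := by
      rw [hθ, div_lt_iff₀ (by positivity)]
      have : (l : ℝ) < N := by exact_mod_cast (by omega : l < N)
      nlinarith [Real.pi_pos]
    have hsθ : Real.sin θ ≠ 0 := (Real.sin_pos_of_pos_of_lt_pi hθpos hθlt).ne'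
    rw [hQev, hζl, pow_mul, ← div_pow, dirichlet_ratio k θ hsθ]
    congr 3 <;> rw [hθ] <;> push_cast [hN] <;> ring
  rw [Finset.sum_congr rfl hterm] at hdft
  -- conclude
  have hNc : ((N : ℕ) : ℂ) ≠ 0 := Nat.cast_ne_zero.2 hN0.ne'
  have hC : (((P ^ n).coeff (k * n) : ℤ) : ℂ)
      = (1 / (N : ℂ)) * (((2 * k + 1 : ℕ) : ℂ) ^ n +
          ∑ l ∈ Finset.Icc 1 (2 * k * n),
            ((Real.sin ((2 * k + 1) * l * Real.pi / (2 * k * n + 1)) /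
              Real.sin (l * Real.pi / (2 * k * n + 1)) : ℝ) : ℂ) ^ n) := by
    have hco : Q.coeff (k * n) = (((P ^ n).coeff (k * n) : ℤ) : ℂ) := by
      rw [hQ, Polynomial.coeff_map]; simp
    rw [one_div, inv_mul_eq_div, eq_div_iff hNc, ← hco, mul_comm]
    exact hdft
  have hR : (2 * (k:ℝ) * n + 1) ≠ 0 := by positivity
  rw [one_div, inv_mul_eq_div, eq_div_iff hR]
  rw [one_div, inv_mul_eq_div, eq_div_iff hNc] at hC
  rw [← Complex.ofReal_inj]
  push_cast [hN] at hC ⊢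
  linear_combination hC
end

section
/- For every integer n ≥ 1, the central trinomial coefficient (the coefficient of x^n in (1 + x + x^2)^n) equals (1/(2n+1)) · (3^n + Σ_{l=1}^{2n} (sin(3lπ/(2n+1)) / sin(lπ/(2n+1)))^n). -/
open Real Finset Polynomial

lemma root_filter (N : ℕ) (ζ : ℂ) (hζ : IsPrimitiveRoot ζ N) (p : ℂ[X])
    (hp : p.natDegree < N) (k : ℕ) (hk : k < N) :
    (N : ℂ) * p.coeff k = ∑ l ∈ Finset.range N, ζ ^ (l * (N - k)) * p.eval (ζ ^ l) := by
  have hN1 : ζ ^ N = 1 := hζ.pow_eq_one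
  have hinner : ∀ j ∈ Finset.range N,
      (∑ l ∈ Finset.range N, (ζ ^ (N - k + j)) ^ l)
        = if j = k then (N : ℂ) else 0 := by
    intro j hj
    rw [Finset.mem_range] at hj
    by_cases hjk : j = k
    · subst hjk
      have : ζ ^ (N - j + j) = 1 := by
        rw [Nat.sub_add_cancel hk.le, hN1]
      simp [this]
    · have hx1 : ζ ^ (N - k + j) ≠ 1 := by
        rcases lt_or_gt_of_ne hjk with h | h
        · exact hζ.pow_ne_one_of_pos_of_lt (by omega) (by omega)
        · have : ζ ^ (N - k + j) = ζ ^ (j - k) := by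
            have h3 : N - k + j = N + (j - k) := by omega
            rw [h3, pow_add, hN1, one_mul]
          rw [this]
          exact hζ.pow_ne_one_of_pos_of_lt (by omega) (by omega)
      rw [if_neg hjk, geom_sum_eq hx1]
      have : (ζ ^ (N - k + j)) ^ N = 1 := by
        rw [← pow_mul, mul_comm, pow_mul, hN1, one_pow]
      rw [this, sub_self, zero_div]
  symm
  calc ∑ l ∈ Finset.range N, ζ ^ (l * (N - k)) * p.eval (ζ ^ l)
      = ∑ l ∈ Finset.range N, ∑ j ∈ Finset.range N,
          p.coeff j * (ζ ^ (N - k + j)) ^ l := by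
        refine Finset.sum_congr rfl fun l _ => ?_
        rw [eval_eq_sum_range' hp, Finset.mul_sum]
        refine Finset.sum_congr rfl fun j _ => ?_
        have h2 : (N - k + j) * l = l * (N - k) + l * j := by ring
        rw [← pow_mul, ← pow_mul, h2, pow_add]
        ring
    _ = ∑ j ∈ Finset.range N, p.coeff j *
          ∑ l ∈ Finset.range N, (ζ ^ (N - k + j)) ^ l := by
        rw [Finset.sum_comm]
        simp [Finset.mul_sum]
    _ = (N : ℂ) * p.coeff k := by
        rw [Finset.sum_congr rfl fun j hj => by rw [hinner j hj]]
        simp [Finset.sum_ite_eq', hk, mul_comm]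

theorem central_trinomial_sin_formula (n : ℕ) (hn : 1 ≤ n) :
    ((((1 + X + X ^ 2 : ℤ[X]) ^ n).coeff n : ℝ)) =
      (1 / (2 * n + 1)) *
        (3 ^ n +
          ∑ l ∈ Finset.Icc 1 (2 * n),
            (Real.sin (3 * l * Real.pi / (2 * n + 1)) /
              Real.sin (l * Real.pi / (2 * n + 1))) ^ n) := by
  set N : ℕ := 2 * n + 1 with hNdef
  have hNpos : 0 < N := by omega
  set ζ : ℂ := Complex.exp (2 * π * Complex.I / N) with hζdef
  have hζ : IsPrimitiveRoot ζ N := Complex.isPrimitiveRoot_exp N (by omega)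
  set c : ℤ := ((1 + X + X ^ 2 : ℤ[X]) ^ n).coeff n with hcdef
  set p : ℂ[X] := (1 + X + X ^ 2 : ℂ[X]) ^ n with hpdef
  have hdeg : p.natDegree < N := by
    have h1 : (1 + X + X ^ 2 : ℂ[X]).natDegree ≤ 2 := by compute_degree
    calc p.natDegree ≤ n * 2 := by
          rw [hpdef]
          exact (natDegree_pow_le).trans (by nlinarith [h1])
      _ < N := by omega
  have hcoeff : (c : ℂ) = p.coeff n := by
    have hmap : ((1 + X + X ^ 2 : ℤ[X]) ^ n).map (Int.castRingHom ℂ) = p := by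
      simp [hpdef, Polynomial.map_pow, Polynomial.map_add]
    rw [← hmap, Polynomial.coeff_map]
    simp
    exact hcdef
  have hfilter := root_filter N ζ hζ p hdeg n (by omega)
  -- per-term rewrite
  have hterm : ∀ l ∈ Finset.range N,
      ζ ^ (l * (N - n)) * p.eval (ζ ^ l)
        = (((1 + 2 * Real.cos (2 * π * l / N)) ^ n : ℝ) : ℂ) := by
    intro l _
    set θ : ℝ := 2 * π * l / N with hθdef
    have hw : ζ ^ l = Complex.exp ((θ : ℂ) * Complex.I) := by
      rw [hζdef, ← Complex.exp_nat_mul]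
      congr 1
      have : ((N : ℂ)) ≠ 0 := by exact_mod_cast hNpos.ne'
      field_simp [hθdef]
      rw [hθdef]; push_cast
      field_simp
    set w : ℂ := ζ ^ l
    have e1 : Complex.exp ((θ : ℂ) * Complex.I)
        = Complex.cos θ + Complex.sin θ * Complex.I := Complex.exp_mul_I _
    have e2 : Complex.exp (-(θ : ℂ) * Complex.I)
        = Complex.cos θ - Complex.sin θ * Complex.I := by
      rw [Complex.exp_mul_I, Complex.cos_neg, Complex.sin_neg]; ring
    have h1 : w * Complex.exp (-(θ : ℂ) * Complex.I) = 1 := by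
      rw [hw, ← Complex.exp_add]
      have : (θ : ℂ) * Complex.I + -(θ : ℂ) * Complex.I = 0 := by ring
      rw [this, Complex.exp_zero]
    have key : 1 + w + w ^ 2 = w * (1 + 2 * Complex.cos (θ : ℂ)) := by
      calc 1 + w + w ^ 2
          = w * Complex.exp (-(θ : ℂ) * Complex.I) + w + w ^ 2 := by rw [h1]
        _ = w * (Complex.exp (-(θ : ℂ) * Complex.I) + 1 + w) := by ring
        _ = w * (Complex.cos θ - Complex.sin θ * Complex.I + 1
              + (Complex.cos θ + Complex.sin θ * Complex.I)) := by rw [e2, hw, e1]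
        _ = w * (1 + 2 * Complex.cos (θ : ℂ)) := by ring
    have heval : p.eval w = (1 + w + w ^ 2) ^ n := by
      simp [hpdef]
    rw [heval, key, mul_pow, ← mul_assoc]
    have hww : ζ ^ (l * (N - n)) * w ^ n = 1 := by
      show ζ ^ (l * (N - n)) * (ζ ^ l) ^ n = 1
      rw [← pow_mul, ← pow_add]
      have : l * (N - n) + l * n = N * l := by
        rw [← Nat.mul_add, Nat.sub_add_cancel (by omega : n ≤ N), Nat.mul_comm]
      rw [this, pow_mul, hζ.pow_eq_one, one_pow]
    rw [hww, one_mul]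
    push_cast [Complex.ofReal_cos]
    ring
  rw [Finset.sum_congr rfl hterm] at hfilter
  -- convert to real equation
  have hreal : (N : ℝ) * (c : ℝ)
      = ∑ l ∈ Finset.range N, (1 + 2 * Real.cos (2 * π * l / N)) ^ n := by
    rw [← hcoeff] at hfilter
    exact_mod_cast hfilter
  -- split off l = 0 and rewrite terms
  have hsplit : ∑ l ∈ Finset.range N, (1 + 2 * Real.cos (2 * π * l / N)) ^ n
      = 3 ^ n + ∑ l ∈ Finset.Icc 1 (2 * n), (1 + 2 * Real.cos (2 * π * l / N)) ^ n := by
    rw [Finset.range_eq_Ico, Finset.sum_eq_sum_Ico_succ_bot hNpos]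
    have h2 : Finset.Ico 1 N = Finset.Icc 1 (2 * n) := by rw [hNdef, Finset.Ico_add_one_right_eq_Icc]
    rw [h2]
    norm_num
  have hterm2 : ∀ l ∈ Finset.Icc 1 (2 * n),
      (1 + 2 * Real.cos (2 * π * l / N)) ^ n
        = (Real.sin (3 * l * π / (2 * (n:ℝ) + 1)) / Real.sin (l * π / (2 * (n:ℝ) + 1))) ^ n := by
    intro l hl
    rw [Finset.mem_Icc] at hl
    set φ : ℝ := l * π / N with hφdef
    have hNR : (N : ℝ) = 2 * (n : ℝ) + 1 := by push_cast [hNdef]; ring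
    have hNpos' : (0 : ℝ) < N := by exact_mod_cast hNpos
    have hφpos : 0 < φ := by
      apply div_pos _ hNpos'
      have : (0 : ℝ) < l := by exact_mod_cast hl.1
      positivity
    have hφlt : φ < π := by
      rw [hφdef, div_lt_iff₀ hNpos']
      have hlN : (l : ℝ) < N := by
        exact_mod_cast (by omega : l < N)
      nlinarith [Real.pi_pos]
    have hsin : Real.sin φ ≠ 0 := (Real.sin_pos_of_pos_of_lt_pi hφpos hφlt).ne'
    have h3 : Real.sin (3 * l * π / (2 * (n:ℝ) + 1)) = Real.sin φ * (3 - 4 * Real.sin φ ^ 2) := by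
      have : 3 * (l:ℝ) * π / (2 * (n:ℝ) + 1) = 3 * φ := by
        rw [hφdef, hNR]; ring
      rw [this, Real.sin_three_mul]; ring
    have hc2 : Real.cos (2 * π * l / N) = 1 - 2 * Real.sin φ ^ 2 := by
      have : 2 * π * (l:ℝ) / N = 2 * φ := by rw [hφdef]; ring
      rw [this, Real.cos_two_mul, Real.cos_sq']; ring
    have hφ' : (l:ℝ) * π / (2 * (n:ℝ) + 1) = φ := by rw [hφdef, hNR]
    rw [hc2, h3, hφ']
    rw [mul_comm (Real.sin φ), mul_div_assoc, div_self hsin, mul_one]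
    congr 1
    ring
  rw [hsplit, Finset.sum_congr rfl hterm2] at hreal
  have hNR : (N : ℝ) = 2 * (n : ℝ) + 1 := by push_cast [hNdef]; ring
  rw [hNR] at hreal
  have hne : (2 * (n:ℝ) + 1) ≠ 0 := by positivity
  rw [← hreal, one_div, inv_mul_cancel_left₀ hne]
end

section
/- For every integer n ≥ 1, the central pentanomial coefficient (the coefficient of x^{2n} in (1 + x + x^2 + x^3 + x^4)^n) equals (1/(4n+1)) · (5^n + Σ_{l=1}^{4n} (sin(5lπ/(4n+1)) / sin(lπ/(4n+1)))^n). -/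
open Real Finset Polynomial

private lemma sin5aux (x : ℝ) :
    Real.sin (5*x) = Real.sin x * (1 + 2*Real.cos (2*x) + 2*Real.cos (4*x)) := by
  have h1 := Real.sin_sub_sin (3*x) x
  have h2 := Real.sin_sub_sin (5*x) (3*x)
  have e1 : (3*x - x)/2 = x := by ring
  have e2 : (3*x + x)/2 = 2*x := by ring
  have e3 : (5*x - 3*x)/2 = x := by ring
  have e4 : (5*x + 3*x)/2 = 4*x := by ring
  rw [e1, e2] at h1
  rw [e3, e4] at h2
  linear_combination h1 + h2

theorem central_pentanomial_sin_formula (n : ℕ) (hn : 1 ≤ n) :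
    ((((1 + X + X ^ 2 + X ^ 3 + X ^ 4 : ℤ[X]) ^ n).coeff (2 * n) : ℝ)) =
      (1 / (4 * n + 1)) *
        (5 ^ n +
          ∑ l ∈ Finset.Icc 1 (4 * n),
            (Real.sin (5 * l * Real.pi / (4 * n + 1)) /
              Real.sin (l * Real.pi / (4 * n + 1))) ^ n) := by
  have hπ := Real.pi_pos
  set Nn : ℕ := 4*n+1 with hNn
  have hNpos : 0 < Nn := by omega
  have hNC : (Nn:ℂ) ≠ 0 := Nat.cast_ne_zero.2 (by omega)
  have hNR : ((Nn:ℝ)) = 4*(n:ℝ)+1 := by push_cast [hNn]; ring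
  set f : ℤ → ℂ := fun m => Complex.exp (2*(π:ℂ)*Complex.I*m/(Nn:ℂ)) with hf
  have hfadd : ∀ a b : ℤ, f (a+b) = f a * f b := by
    intro a b
    simp only [hf]
    rw [← Complex.exp_add]
    congr 1
    push_cast
    ring
  have hfpow : ∀ (k : ℕ) (m : ℤ), f ((k:ℤ)*m) = (f m)^k := by
    intro k m
    simp only [hf]
    rw [← Complex.exp_nat_mul]
    congr 1
    push_cast
    ring
  have hf0 : f 0 = 1 := by simp [hf]
  have hfN : ∀ m : ℤ, (f m)^Nn = 1 := by
    intro m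
    rw [← hfpow]
    simp only [hf]
    rw [show (2*(π:ℂ)*Complex.I*(((Nn:ℤ)*m : ℤ):ℂ)/(Nn:ℂ)) = (m:ℂ)*(2*(π:ℂ)*Complex.I) by
      rw [div_eq_iff hNC]; push_cast; ring]
    exact Complex.exp_int_mul_two_pi_mul_I m
  have h2πI : (2*(π:ℂ)*Complex.I) ≠ 0 :=
    mul_ne_zero (mul_ne_zero two_ne_zero (Complex.ofReal_ne_zero.2 Real.pi_ne_zero))
      Complex.I_ne_zero
  have hfilter : ∀ m : ℤ, ¬ ((Nn:ℤ) ∣ m) → ∑ l ∈ range Nn, f ((l:ℤ)*m) = 0 := by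
    intro m hm
    have hne1 : f m ≠ 1 := by
      intro h
      simp only [hf] at h
      rw [Complex.exp_eq_one_iff] at h
      obtain ⟨k, hk⟩ := h
      apply hm
      refine ⟨k, ?_⟩
      have hk' : 2*(π:ℂ)*Complex.I*(m:ℂ) = (k:ℂ)*(2*(π:ℂ)*Complex.I)*(Nn:ℂ) := by
        have h3 := congrArg (fun z => z * (Nn:ℂ)) hk
        simp only [div_mul_cancel₀ _ hNC] at h3
        exact h3
      have h2 : (m:ℂ) = (Nn:ℂ)*(k:ℂ) :=
        mul_left_cancel₀ h2πI (by linear_combination hk')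
      exact_mod_cast h2
    have : ∀ l ∈ range Nn, f ((l:ℤ)*m) = (f m)^l := fun l _ => hfpow l m
    rw [Finset.sum_congr rfl this, geom_sum_eq hne1, hfN m]
    simp
  -- polynomial setup
  set P : ℤ[X] := 1 + X + X^2 + X^3 + X^4 with hP
  set Q : ℂ[X] := 1 + X + X^2 + X^3 + X^4 with hQ
  have hmap : P.map (Int.castRingHom ℂ) = Q := by
    simp [hP, hQ, Polynomial.map_add, Polynomial.map_pow, Polynomial.map_one, Polynomial.map_X]
  have hcoeff : ∀ k, (((P^n).coeff k : ℤ) : ℂ) = (Q^n).coeff k := by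
    intro k
    rw [← hmap, ← Polynomial.map_pow, Polynomial.coeff_map]
    simp
  have hdegQ : Q.natDegree = 4 := by rw [hQ]; compute_degree!
  have hdeg : (Q^n).natDegree < 4*n+1 := by
    rw [Polynomial.natDegree_pow, hdegQ]; omega
  -- the master sum
  have hS1 : ∑ l ∈ range Nn, f ((-(2*(n:ℤ)))*(l:ℤ)) * (Q.eval (f (l:ℤ)))^n
      = (Nn:ℂ) * ((Q^n).coeff (2*n)) := by
    have hterm : ∀ l ∈ range Nn, f ((-(2*(n:ℤ)))*(l:ℤ)) * (Q.eval (f (l:ℤ)))^n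
        = ∑ k ∈ range (4*n+1), (Q^n).coeff k * f ((l:ℤ)*((k:ℤ) - 2*n)) := by
      intro l _
      rw [← Polynomial.eval_pow, eval_eq_sum_range' hdeg, Finset.mul_sum]
      refine Finset.sum_congr rfl (fun k _ => ?_)
      have hkey : f ((-(2*(n:ℤ)))*(l:ℤ)) * (f (l:ℤ))^k = f ((l:ℤ)*((k:ℤ)-2*n)) := by
        rw [← hfpow k (l:ℤ), ← hfadd]
        congr 1
        ring
      calc f ((-(2*(n:ℤ)))*(l:ℤ)) * ((Q^n).coeff k * (f (l:ℤ))^k)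
          = (Q^n).coeff k * (f ((-(2*(n:ℤ)))*(l:ℤ)) * (f (l:ℤ))^k) := by ring
        _ = (Q^n).coeff k * f ((l:ℤ)*((k:ℤ)-2*n)) := by rw [hkey]
    rw [Finset.sum_congr rfl hterm, Finset.sum_comm]
    have : ∀ k ∈ range (4*n+1), ∑ l ∈ range Nn, (Q^n).coeff k * f ((l:ℤ)*((k:ℤ)-2*n))
        = (Q^n).coeff k * ∑ l ∈ range Nn, f ((l:ℤ)*((k:ℤ)-2*n)) := by
      intro k _
      rw [Finset.mul_sum]
    rw [Finset.sum_congr rfl this]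
    rw [Finset.sum_eq_single (2*n)]
    · have : ∀ l ∈ range Nn, f ((l:ℤ)*(((2*n:ℕ):ℤ)-2*n)) = 1 := by
        intro l _
        rw [show ((l:ℤ)*(((2*n:ℕ):ℤ)-2*n)) = 0 by push_cast; ring]
        exact hf0
      rw [Finset.sum_congr rfl this]
      simp [mul_comm]
    · intro k hk hkne
      rw [Finset.mem_range] at hk
      have hnd : ¬ ((Nn:ℤ) ∣ ((k:ℤ) - 2*n)) := by
        intro hdvd
        have hm0 : ((k:ℤ) - 2*n) ≠ 0 := by
          intro h
          apply hkne
          omega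
        have h1 := Int.le_of_dvd (abs_pos.2 hm0) ((dvd_abs _ _).2 hdvd)
        have h2 : |((k:ℤ) - 2*n)| ≤ 2*n := by
          rw [abs_le]
          omega
        omega
      rw [hfilter _ hnd, mul_zero]
    · intro h
      exact absurd (Finset.mem_range.2 (by omega)) h
  -- evaluate termwise with sines
  have hQ1 : Q.eval 1 = 5 := by
    simp [hQ]
    norm_num
  have hsplit : (range Nn) = insert 0 (Finset.Icc 1 (4*n)) := by
    ext x
    simp only [Finset.mem_range, Finset.mem_insert, Finset.mem_Icc, hNn]
    omega
  have hS2 : ∑ l ∈ range Nn, f ((-(2*(n:ℤ)))*(l:ℤ)) * (Q.eval (f (l:ℤ)))^n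
      = (((5:ℝ)^n + ∑ l ∈ Finset.Icc 1 (4*n),
          (Real.sin (5 * l * π / (4 * (n:ℝ) + 1)) /
            Real.sin (l * π / (4 * (n:ℝ) + 1))) ^ n : ℝ) : ℂ) := by
    rw [hsplit, Finset.sum_insert (by simp)]
    have h0 : f ((-(2*(n:ℤ)))*((0:ℕ):ℤ)) * (Q.eval (f ((0:ℕ):ℤ)))^n = (5:ℂ)^n := by
      norm_num [hf0, hQ1]
    have hterm : ∀ l ∈ Finset.Icc 1 (4*n), f ((-(2*(n:ℤ)))*(l:ℤ)) * (Q.eval (f (l:ℤ)))^n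
        = (((Real.sin (5 * l * π / (4 * (n:ℝ) + 1)) /
            Real.sin (l * π / (4 * (n:ℝ) + 1))) ^ n : ℝ) : ℂ) := by
      intro l hl
      rw [Finset.mem_Icc] at hl
      set x : ℝ := l * π / (4 * (n:ℝ) + 1) with hx
      have hx0 : 0 < x := by
        apply div_pos
        · have : (1:ℝ) ≤ l := by exact_mod_cast hl.1
          positivity
        · positivity
      have hxπ : x < π := by
        rw [hx, div_lt_iff₀ (by positivity)]
        have hl4 : (l:ℝ) ≤ 4*n := by exact_mod_cast hl.2
        nlinarith
      have hsx : Real.sin x ≠ 0 := ne_of_gt (Real.sin_pos_of_pos_of_lt_pi hx0 hxπ)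
      have hid : 1 + 2*Real.cos (2*x) + 2*Real.cos (4*x) = Real.sin (5*x)/Real.sin x := by
        rw [sin5aux x]
        field_simp
      -- f m as exp of real multiple of I
      have hfm : ∀ m : ℤ, f m = Complex.exp (((2*π*m/(Nn:ℝ) : ℝ) : ℂ) * Complex.I) := by
        intro m
        simp only [hf]
        congr 1
        push_cast
        ring
      have hcos : ∀ m : ℤ, f m + f (-m) = ((2 * Real.cos (2*π*m/(Nn:ℝ)) : ℝ) : ℂ) := by
        intro m
        rw [hfm m, hfm (-m)]
        rw [show (2*π*((-m:ℤ):ℝ)/(Nn:ℝ) : ℝ) = -(2*π*(m:ℝ)/(Nn:ℝ)) by push_cast; ring]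
        rw [Complex.ofReal_neg, Complex.exp_mul_I, Complex.exp_mul_I,
          Complex.cos_neg, Complex.sin_neg, ← Complex.ofReal_cos]
        push_cast
        ring
      have hQe : Q.eval (f (l:ℤ)) = 1 + f (l:ℤ) + f (2*(l:ℤ)) + f (3*(l:ℤ)) + f (4*(l:ℤ)) := by
        simp only [hQ, eval_add, eval_pow, eval_X, eval_one]
        rw [show ((2:ℤ)*(l:ℤ)) = ((2:ℕ):ℤ)*(l:ℤ) by norm_num,
            show ((3:ℤ)*(l:ℤ)) = ((3:ℕ):ℤ)*(l:ℤ) by norm_num,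
            show ((4:ℤ)*(l:ℤ)) = ((4:ℕ):ℤ)*(l:ℤ) by norm_num,
            hfpow 2, hfpow 3, hfpow 4]
      have key : f (-2*(l:ℤ)) * Q.eval (f (l:ℤ))
          = ((Real.sin (5*x)/Real.sin x : ℝ) : ℂ) := by
        rw [hQe]
        have m1 : f (-2*(l:ℤ)) * f (l:ℤ) = f (-(l:ℤ)) := by rw [← hfadd]; congr 1; ring
        have m2 : f (-2*(l:ℤ)) * f (2*(l:ℤ)) = 1 := by
          rw [← hfadd, show (-2*(l:ℤ) + 2*(l:ℤ)) = 0 by ring]; exact hf0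
        have m3 : f (-2*(l:ℤ)) * f (3*(l:ℤ)) = f (l:ℤ) := by rw [← hfadd]; congr 1; ring
        have m4 : f (-2*(l:ℤ)) * f (4*(l:ℤ)) = f (2*(l:ℤ)) := by rw [← hfadd]; congr 1; ring
        have hneg2 : f (-(2*(l:ℤ))) = f (-2*(l:ℤ)) := by norm_num
        have e : f (-2*(l:ℤ)) * (1 + f (l:ℤ) + f (2*(l:ℤ)) + f (3*(l:ℤ)) + f (4*(l:ℤ)))
            = 1 + (f (l:ℤ) + f (-(l:ℤ))) + (f (2*(l:ℤ)) + f (-(2*(l:ℤ)))) := by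
          linear_combination m1 + m2 + m3 + m4 - hneg2
        rw [e, hcos (l:ℤ), hcos (2*(l:ℤ))]
        rw [show (2*π*(((l:ℤ)):ℝ)/(Nn:ℝ)) = 2*x by rw [hNR, hx]; push_cast; ring]
        rw [show (2*π*(((2*(l:ℤ) : ℤ)):ℝ)/(Nn:ℝ)) = 4*x by rw [hNR, hx]; push_cast; ring]
        rw [← hid]
        push_cast
        ring
      have h5x : 5*(l:ℝ)*π/(4*(n:ℝ)+1) = 5*x := by rw [hx]; ring
      rw [h5x]
      have hpw : f ((-(2*(n:ℤ)))*(l:ℤ)) = (f (-2*(l:ℤ)))^n := by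
        rw [← hfpow n (-2*(l:ℤ))]
        congr 1
        ring
      rw [hpw, ← mul_pow, key, ← Complex.ofReal_pow]
    rw [Finset.sum_congr rfl hterm, h0]
    push_cast
    ring
  -- combine
  have hmain : ((Nn:ℝ) * (((P^n).coeff (2*n) : ℤ) : ℝ) : ℝ)
      = (5:ℝ)^n + ∑ l ∈ Finset.Icc 1 (4*n),
          (Real.sin (5 * l * π / (4 * (n:ℝ) + 1)) /
            Real.sin (l * π / (4 * (n:ℝ) + 1))) ^ n := by
    have := hS1.symm.trans hS2
    rw [← hcoeff (2*n)] at this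
    have h2 : (((Nn:ℝ) * (((P^n).coeff (2*n) : ℤ) : ℝ) : ℝ) : ℂ)
        = (((5:ℝ)^n + ∑ l ∈ Finset.Icc 1 (4*n),
          (Real.sin (5 * l * π / (4 * (n:ℝ) + 1)) /
            Real.sin (l * π / (4 * (n:ℝ) + 1))) ^ n : ℝ) : ℂ) := by
      push_cast
      push_cast at this
      linear_combination this
    exact_mod_cast h2
  rw [hNR] at hmain
  have h41 : (4*(n:ℝ)+1) ≠ 0 := by positivity
  rw [← hmain]
  field_simp
end

section
/- For integers k ≥ 1 and n ≥ 1, the sum Σ_{l=1}^{2kn} (sin((2k+1)lπ/(2kn+1)) / sin(lπ/(2kn+1)))^n is an integer, namely (2kn+1)·M^{(2k,n)} − (2k+1)^n, where M^{(2k,n)} is the coefficient of x^{kn} in (1+x+...+x^{2k})^n. -/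
open Real Finset Polynomial Complex

lemma sin_ratio_eq (m : ℕ) (B : ℝ) (hB : Real.sin B ≠ 0) :
    (↑(Real.sin ((2 * m + 1) * B) / Real.sin B) : ℂ) =
      ∑ j ∈ Finset.range (2 * m + 1),
        Complex.exp ((2 * B : ℝ) * Complex.I) ^ ((j : ℤ) - m) := by
  have hsB : Complex.sin B ≠ 0 := by
    rw [← Complex.ofReal_sin]; exact_mod_cast hB
  set f : ℕ → ℂ := fun j => Complex.exp ((2 * (j : ℂ) - (2 * m + 1)) * B * Complex.I) with hf
  have key : (∑ j ∈ Finset.range (2 * m + 1),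
        Complex.exp ((2 * B : ℝ) * Complex.I) ^ ((j : ℤ) - m)) * (2 * Complex.I * Complex.sin B)
      = 2 * Complex.I * Complex.sin ((2 * (m:ℂ) + 1) * B) := by
    rw [Finset.sum_mul]
    have hsummand : ∀ j ∈ Finset.range (2 * m + 1),
        Complex.exp ((2 * B : ℝ) * Complex.I) ^ ((j : ℤ) - m) * (2 * Complex.I * Complex.sin B)
          = f (j + 1) - f j := by
      intro j _
      have h1 : Complex.exp ((2 * B : ℝ) * Complex.I) ^ ((j : ℤ) - m)
          = Complex.exp (((j:ℂ) - m) * (2 * B * Complex.I)) := by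
        rw [← Complex.exp_int_mul]
        congr 1
        push_cast
        ring
      have e1 : Complex.exp (((j:ℂ) - m) * (2 * B * Complex.I)) * Complex.exp ((B:ℂ) * Complex.I)
          = f (j + 1) := by
        rw [← Complex.exp_add]; simp only [hf]
        congr 1
        push_cast
        ring
      have e2 : Complex.exp (((j:ℂ) - m) * (2 * B * Complex.I)) * Complex.exp (-(B:ℂ) * Complex.I)
          = f j := by
        rw [← Complex.exp_add]; simp only [hf]
        congr 1
        push_cast
        ring
      rw [h1, Complex.sin]
      linear_combination e1 - e2 + (Complex.exp (((j:ℂ) - m) * (2 * B * Complex.I)) *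
        (Complex.exp (-(B:ℂ) * Complex.I) - Complex.exp ((B:ℂ) * Complex.I))) * Complex.I_sq
    rw [Finset.sum_congr rfl hsummand, Finset.sum_range_sub f (2 * m + 1)]
    have g1 : f (2 * m + 1) = Complex.exp ((2 * (m:ℂ) + 1) * B * Complex.I) := by
      simp only [hf]; congr 1; push_cast; ring
    have g2 : f 0 = Complex.exp (-((2 * (m:ℂ) + 1) * B * Complex.I)) := by
      simp only [hf]; congr 1; push_cast; ring
    rw [g1, g2, Complex.sin]
    have : -((2 * (m:ℂ) + 1) * ↑B) * Complex.I = -((2 * (m:ℂ) + 1) * B * Complex.I) := by ring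
    rw [this]
    linear_combination (Complex.exp ((2 * (m:ℂ) + 1) * B * Complex.I) -
      Complex.exp (-((2 * (m:ℂ) + 1) * B * Complex.I))) * Complex.I_sq
  rw [Complex.ofReal_div, Complex.ofReal_sin, Complex.ofReal_sin, div_eq_iff hsB]
  apply mul_left_cancel₀ (show (2:ℂ) * Complex.I ≠ 0 by simp [Complex.I_ne_zero])
  have harg : ((2 * (m:ℝ) + 1) * B : ℝ) = ((2 * (m:ℂ) + 1) * B : ℂ) := by push_cast; ring
  rw [harg]
  linear_combination -key

theorem trig_sum_is_integer (k n : ℕ) (hk : 1 ≤ k) (hn : 1 ≤ n) :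
    ∑ l ∈ Finset.Icc 1 (2 * k * n),
        (Real.sin ((2 * k + 1) * l * Real.pi / (2 * k * n + 1)) /
          Real.sin (l * Real.pi / (2 * k * n + 1))) ^ n =
      (2 * k * n + 1) *
          ((((∑ i ∈ Finset.range (2 * k + 1), (X : ℤ[X]) ^ i) ^ n).coeff (k * n) : ℝ)) -
        (2 * k + 1) ^ n := by
  have hNnz : (2 * k * n + 1 : ℕ) ≠ 0 := by omega
  set N : ℕ := 2 * k * n + 1 with hNdef
  set P : ℤ[X] := ∑ i ∈ Finset.range (2 * k + 1), X ^ i with hPdef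
  set ω : ℂ := Complex.exp (2 * Real.pi * Complex.I / N) with hωdef
  have hprim : IsPrimitiveRoot ω N := Complex.isPrimitiveRoot_exp N hNnz
  have hω0 : ω ≠ 0 := Complex.exp_ne_zero _
  have hωl0 : ∀ l : ℕ, ω ^ l ≠ 0 := fun l => pow_ne_zero l hω0
  -- degree bound
  have hdegP : P.natDegree ≤ 2 * k := by
    rw [hPdef]
    refine le_trans (Polynomial.natDegree_sum_le _ _) ?_
    rw [Finset.fold_max_le]
    refine ⟨Nat.zero_le _, fun i hi => ?_⟩
    simp only [Function.comp_apply, Polynomial.natDegree_X_pow]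
    exact Nat.lt_succ_iff.mp (Finset.mem_range.mp hi)
  have hdeg : (P ^ n).natDegree < N := by
    have h1 : (P ^ n).natDegree ≤ n * (2 * k) :=
      le_trans Polynomial.natDegree_pow_le (Nat.mul_le_mul_left n hdegP)
    have h2 : n * (2 * k) = 2 * k * n := by ring
    rw [hNdef]
    omega
  -- swap exponent lemma
  have hswap : ∀ (z : ℤ) (l : ℕ), (ω ^ l) ^ z = (ω ^ z) ^ l := by
    intro z l
    rw [← zpow_natCast ω l, ← zpow_mul, mul_comm, zpow_mul, zpow_natCast]
  set g : ℕ → ℂ := fun l => (ω ^ l) ^ (-(k * n : ℤ)) * (Polynomial.aeval (ω ^ l)) (P ^ n)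
    with hgdef
  -- expansion of g
  have hexpand : ∀ l : ℕ, g l
      = ∑ m ∈ Finset.range N, ((P ^ n).coeff m : ℂ) * (ω ^ ((m : ℤ) - k * n)) ^ l := by
    intro l
    rw [hgdef]
    simp only
    rw [Polynomial.aeval_eq_sum_range' hdeg, Finset.mul_sum]
    refine Finset.sum_congr rfl fun m _ => ?_
    rw [zsmul_eq_mul]
    have : (ω ^ l) ^ (-(k * n : ℤ)) * (((P ^ n).coeff m : ℂ) * (ω ^ l) ^ m)
        = ((P ^ n).coeff m : ℂ) * ((ω ^ l) ^ (-(k * n : ℤ)) * (ω ^ l) ^ (m : ℤ)) := by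
      rw [zpow_natCast]; ring
    rw [this, ← zpow_add₀ (hωl0 l), ← hswap]
    congr 2
    ring
  -- geometric sum evaluation
  have hinner : ∀ m ∈ Finset.range N,
      (∑ l ∈ Finset.range N, (ω ^ ((m : ℤ) - k * n)) ^ l)
        = if m = k * n then (N : ℂ) else 0 := by
    intro m hm
    rcases eq_or_ne m (k * n) with h | h
    · subst h
      simp
    · rw [if_neg h]
      have hζ : ω ^ ((m : ℤ) - k * n) ≠ 1 := by
        intro hone
        have hdvd : (N : ℤ) ∣ ((m : ℤ) - k * n) := (hprim.zpow_eq_one_iff_dvd _).mp hone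
        have hmN : m < N := Finset.mem_range.mp hm
        have h3 : ((k : ℤ)) * (n : ℤ) = ((k * n : ℕ) : ℤ) := by push_cast; ring
        have h2 : ((N : ℕ) : ℤ) = 2 * ((k * n : ℕ) : ℤ) + 1 := by
          rw [hNdef]; push_cast; ring
        have hz : ((m : ℤ) - k * n) = 0 := by
          refine Int.eq_zero_of_abs_lt_dvd hdvd ?_
          have h1 : (m : ℤ) < 2 * ((k * n : ℕ) : ℤ) + 1 := by
            rw [← h2]; exact_mod_cast hmN
          rw [abs_lt, h2, h3]
          omega
        rw [h3, sub_eq_zero] at hz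
        exact h (by exact_mod_cast hz)
      rw [geom_sum_eq hζ]
      have hζN : (ω ^ ((m : ℤ) - k * n)) ^ N = 1 := by
        rw [← zpow_natCast _ N, ← zpow_mul, mul_comm, zpow_mul, zpow_natCast,
          hprim.pow_eq_one, one_zpow]
      rw [hζN]
      simp
  -- the total sum
  have hS : ∑ l ∈ Finset.range N, g l = (N : ℂ) * ((P ^ n).coeff (k * n) : ℂ) := by
    calc ∑ l ∈ Finset.range N, g l
        = ∑ l ∈ Finset.range N, ∑ m ∈ Finset.range N,
            ((P ^ n).coeff m : ℂ) * (ω ^ ((m : ℤ) - k * n)) ^ l :=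
          Finset.sum_congr rfl fun l _ => hexpand l
      _ = ∑ m ∈ Finset.range N, ((P ^ n).coeff m : ℂ)
            * ∑ l ∈ Finset.range N, (ω ^ ((m : ℤ) - k * n)) ^ l := by
          rw [Finset.sum_comm]
          exact Finset.sum_congr rfl fun m _ => by rw [Finset.mul_sum]
      _ = ∑ m ∈ Finset.range N, ((P ^ n).coeff m : ℂ)
            * (if m = k * n then (N : ℂ) else 0) :=
          Finset.sum_congr rfl fun m hm => by rw [hinner m hm]
      _ = (N : ℂ) * ((P ^ n).coeff (k * n) : ℂ) := by
          simp only [mul_ite, mul_zero]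
          rw [Finset.sum_ite_eq' (Finset.range N) (k * n)
            (fun m => ((P ^ n).coeff m : ℂ) * (N : ℂ))]
          rw [if_pos (by rw [hNdef]; refine Finset.mem_range.mpr ?_; nlinarith)]
          ring
  -- g 0
  have hg0 : g 0 = ((2 * k + 1 : ℕ) : ℂ) ^ n := by
    rw [hgdef]
    simp only [pow_zero, one_zpow, one_mul, map_pow]
    rw [hPdef]
    simp
  -- pointwise identification
  have hpt : ∀ l ∈ Finset.Icc 1 (2 * k * n),
      ((Real.sin ((2 * k + 1) * l * Real.pi / (2 * k * n + 1)) /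
          Real.sin (l * Real.pi / (2 * k * n + 1)) : ℝ) : ℂ) ^ n = g l := by
    intro l hl
    obtain ⟨hl1, hl2⟩ := Finset.mem_Icc.mp hl
    set B : ℝ := l * Real.pi / (2 * k * n + 1) with hBdef
    have hD : (0 : ℝ) < 2 * k * n + 1 := by positivity
    have hBpos : 0 < B := by
      rw [hBdef]
      have : (0:ℝ) < l := by exact_mod_cast hl1
      positivity
    have hBlt : B < Real.pi := by
      rw [hBdef, div_lt_iff₀ hD]
      have hlR : (l : ℝ) < 2 * k * n + 1 := by push_cast; exact_mod_cast by omega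
      nlinarith [Real.pi_pos]
    have hsB : Real.sin B ≠ 0 := ne_of_gt (Real.sin_pos_of_pos_of_lt_pi hBpos hBlt)
    have hA : (2 * k + 1 : ℝ) * l * Real.pi / (2 * k * n + 1) = (2 * k + 1 : ℕ) * B := by
      rw [hBdef]; push_cast; ring
    have hA' : ((2 * k + 1 : ℕ) : ℝ) * B = (2 * (k:ℝ) + 1) * B := by push_cast; ring
    have hratio := sin_ratio_eq k B hsB
    have hexp : Complex.exp ((2 * B : ℝ) * Complex.I) = ω ^ l := by
      rw [hωdef, ← Complex.exp_nat_mul]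
      congr 1
      rw [hBdef]
      push_cast
      field_simp
      have hNc : ((N:ℕ):ℂ) = 2 * k * n + 1 := by rw [hNdef]; push_cast; ring
      have hne : (2 * (k:ℂ) * n + 1) ≠ 0 := by exact_mod_cast (show 2 * k * n + 1 ≠ 0 by omega)
      rw [hNc, mul_div_assoc, div_self hne, mul_one]
    rw [hexp] at hratio
    have hsum1 : (∑ j ∈ Finset.range (2 * k + 1), (ω ^ l) ^ ((j : ℤ) - k))
        = (ω ^ l) ^ (-(k : ℤ)) * (Polynomial.aeval (ω ^ l)) P := by
      have hPev : (Polynomial.aeval (ω ^ l)) P = ∑ j ∈ Finset.range (2 * k + 1), (ω ^ l) ^ j := by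
        rw [hPdef]; simp
      rw [hPev, Finset.mul_sum]
      refine Finset.sum_congr rfl fun j _ => ?_
      rw [← zpow_natCast (ω ^ l) j, ← zpow_add₀ (hωl0 l)]
      congr 1
      ring
    have harg : (2 * (k:ℝ) + 1) * B = (2 * k + 1 : ℝ) * l * Real.pi / (2 * k * n + 1) := by
      rw [hA, hA']
    rw [← harg]
    calc ((Real.sin ((2 * (k:ℝ) + 1) * B) / Real.sin B : ℝ) : ℂ) ^ n
        = ((ω ^ l) ^ (-(k : ℤ)) * (Polynomial.aeval (ω ^ l)) P) ^ n := by
          rw [← hsum1, ← hratio]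
      _ = g l := by
          rw [hgdef]
          simp only
          rw [mul_pow, map_pow, ← zpow_natCast ((ω ^ l) ^ (-(k:ℤ))) n, ← zpow_mul]
          congr 2
          push_cast
          ring
  -- assemble
  rw [← Complex.ofReal_inj]
  push_cast [-Complex.ofReal_sin]
  have hLHS : ∑ l ∈ Finset.Icc 1 (2 * k * n),
      ((Real.sin ((2 * k + 1) * l * Real.pi / (2 * k * n + 1)) : ℂ) /
        (Real.sin (l * Real.pi / (2 * k * n + 1)) : ℂ)) ^ n
      = ∑ l ∈ Finset.Icc 1 (2 * k * n), g l := by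
    refine Finset.sum_congr rfl fun l hl => ?_
    rw [← hpt l hl]
    push_cast
    ring
  rw [hLHS]
  have hsplit : ∑ l ∈ Finset.range N, g l = g 0 + ∑ l ∈ Finset.Icc 1 (2 * k * n), g l := by
    have h1 : Finset.Icc 1 (2 * k * n) = Finset.Ico 1 N := by
      rw [hNdef, Finset.Ico_add_one_right_eq_Icc]
    rw [h1, Finset.sum_Ico_eq_sum_range]
    rw [hNdef]
    rw [Finset.sum_range_succ' g (2 * k * n)]
    simp [add_comm]
  have : ∑ l ∈ Finset.Icc 1 (2 * k * n), g l
      = (N : ℂ) * ((P ^ n).coeff (k * n) : ℂ) - ((2 * k + 1 : ℕ) : ℂ) ^ n := by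
    rw [← hS, hsplit, hg0]; ring
  rw [this, hNdef]
  push_cast
  ring
end

section
/- For integers k ≥ 1 and n ≥ 1, the central (2k+1)-nomial coefficient M^{(2k,n)} equals (1/(2kn+1)) · ((2k+1)^n + Σ_{l=1}^{2kn} (U_{2k}(cos(lπ/(2kn+1))))^n), where U_{2k} is the Chebyshev polynomial of the second kind of degree 2k. -/
open Real Finset Polynomial

section Aux
open Complex

lemma fourier_coeff (N : ℕ) (hN : 0 < N) (q : ℂ[X]) (hq : q.natDegree < N) (m : ℕ) (hm : m < N) :
    (N : ℂ) * q.coeff m =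
      ∑ l ∈ range N, q.eval ((Complex.exp (2 * Real.pi * Complex.I / N)) ^ l) *
        (((Complex.exp (2 * Real.pi * Complex.I / N)) ^ m)⁻¹) ^ l := by
  set ω : ℂ := Complex.exp (2 * Real.pi * Complex.I / N) with hω
  have hprim : IsPrimitiveRoot ω N := Complex.isPrimitiveRoot_exp N hN.ne'
  have hω0 : ω ≠ 0 := Complex.exp_ne_zero _
  have hωN : ω ^ N = 1 := hprim.pow_eq_one
  symm
  calc ∑ l ∈ range N, q.eval (ω ^ l) * ((ω ^ m)⁻¹) ^ l
      = ∑ l ∈ range N, ∑ j ∈ range N, q.coeff j * (ω ^ j * (ω ^ m)⁻¹) ^ l := by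
        refine Finset.sum_congr rfl fun l _ => ?_
        rw [Polynomial.eval_eq_sum_range' hq, Finset.sum_mul]
        refine Finset.sum_congr rfl fun j _ => ?_
        rw [mul_pow, mul_assoc, ← pow_mul, ← pow_mul, Nat.mul_comm l j]
    _ = ∑ j ∈ range N, q.coeff j * ∑ l ∈ range N, (ω ^ j * (ω ^ m)⁻¹) ^ l := by
        rw [Finset.sum_comm]
        simp [Finset.mul_sum]
    _ = (N : ℂ) * q.coeff m := by
        rw [Finset.sum_eq_single m]
        · rw [show ω ^ m * (ω ^ m)⁻¹ = 1 from mul_inv_cancel₀ (pow_ne_zero _ hω0)]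
          simp [mul_comm]
        · intro j hj hjm
          have hu1 : ω ^ j * (ω ^ m)⁻¹ ≠ 1 := by
            intro h
            exact hjm (hprim.pow_inj (Finset.mem_range.mp hj) hm
              (by field_simp at h; exact h))
          have huN : (ω ^ j * (ω ^ m)⁻¹) ^ N = 1 := by
            rw [mul_pow, ← pow_mul, Nat.mul_comm j N, pow_mul, hωN, one_pow, ← inv_pow,
              ← pow_mul, Nat.mul_comm m N, pow_mul, inv_pow, hωN, inv_one, one_pow, mul_one]
          rw [geom_sum_eq hu1, huN]
          simp
        · intro h; exact absurd (Finset.mem_range.mpr hm) h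

lemma exp_sub_inv_eq (x : ℝ) :
    Complex.exp (x*I) - (Complex.exp (x*I))⁻¹ = 2*I*(Real.sin x : ℂ) := by
  rw [← Complex.exp_neg, ← neg_mul, Complex.exp_mul_I, Complex.exp_mul_I]
  simp [Complex.cos_neg, Complex.sin_neg]
  ring

lemma dirichlet_eval (N k l : ℕ) (hl : 1 ≤ l) (hlN : l < N) :
    (∑ i ∈ range (2*k+1), ((Complex.exp (2 * Real.pi * Complex.I / N)) ^ l) ^ i) *
      (((Complex.exp (2 * Real.pi * Complex.I / N)) ^ k)⁻¹) ^ l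
      = (((Chebyshev.U ℝ (2*k)).eval (Real.cos (l * Real.pi / N)) : ℝ) : ℂ) := by
  have hN : 0 < N := lt_of_le_of_lt (Nat.zero_le l) hlN
  set θ : ℝ := l * Real.pi / N with hθ
  set ζ : ℂ := Complex.exp (θ*I) with hζ
  have hζ0 : ζ ≠ 0 := Complex.exp_ne_zero _
  have hpow : ∀ m : ℕ, ζ ^ m = Complex.exp (((m*θ : ℝ) : ℂ)*I) := by
    intro m
    rw [hζ, ← Complex.exp_nat_mul]
    push_cast
    ring_nf
  have hsubm : ∀ m : ℕ, ζ ^ m - (ζ ^ m)⁻¹ = 2*I*(Real.sin (m*θ) : ℂ) := by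
    intro m; rw [hpow m, exp_sub_inv_eq]
  have hθpos : 0 < θ := by
    apply div_pos (mul_pos _ Real.pi_pos) (by exact_mod_cast hN)
    exact_mod_cast hl
  have hθlt : θ < Real.pi := by
    rw [hθ, div_lt_iff₀ (by exact_mod_cast hN)]
    have : (l:ℝ) < N := by exact_mod_cast hlN
    nlinarith [Real.pi_pos]
  have hsin : Real.sin θ ≠ 0 := ne_of_gt (Real.sin_pos_of_pos_of_lt_pi hθpos hθlt)
  have hsinC : (Real.sin θ : ℂ) ≠ 0 := by exact_mod_cast hsin
  have hωl : (Complex.exp (2 * Real.pi * Complex.I / N)) ^ l = ζ ^ 2 := by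
    rw [← Complex.exp_nat_mul, hpow 2]
    congr 1
    rw [hθ]
    push_cast
    field_simp
  have hphase : (((Complex.exp (2 * Real.pi * Complex.I / N)) ^ k)⁻¹) ^ l = (ζ ^ (2*k))⁻¹ := by
    rw [inv_pow, ← pow_mul, Nat.mul_comm k l, pow_mul, hωl, ← pow_mul]
  set c : ℝ := (Chebyshev.U ℝ (2*k)).eval (Real.cos θ) with hcdef
  have hc : c * Real.sin θ = Real.sin ((2*k+1)*θ) := by
    have h := Polynomial.Chebyshev.U_real_cos θ (2*k : ℤ)
    rw [hcdef]
    push_cast at h ⊢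
    convert h using 3 <;> ring
  have hgeom : (∑ i ∈ range (2*k+1), (ζ^2) ^ i) * (ζ^2 - 1) = ζ^(2*(2*k+1)) - 1 := by
    rw [geom_sum_mul, ← pow_mul, Nat.mul_comm]
  have hζ2 : ζ^2 - 1 = ζ * (2*I*(Real.sin θ : ℂ)) := by
    have h1 := hsubm 1
    simp only [pow_one, Nat.cast_one, one_mul] at h1
    rw [← h1]
    field_simp
  have hne : ζ^2 - 1 ≠ 0 := by
    rw [hζ2]
    exact mul_ne_zero hζ0 (mul_ne_zero (mul_ne_zero two_ne_zero Complex.I_ne_zero) hsinC)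
  have e2 : ζ^(2*k+1) - (ζ^(2*k+1))⁻¹ = 2*I*(Real.sin ((2*k+1)*θ) : ℂ) := by
    rw [hsubm (2*k+1)]
    push_cast
    ring_nf
  have hfact : ζ^(2*(2*k+1)) - 1 = ζ^(2*k+1) * (ζ^(2*k+1) - (ζ^(2*k+1))⁻¹) := by
    rw [mul_sub, mul_inv_cancel₀ (pow_ne_zero _ hζ0), ← pow_add]
    ring_nf
  have key : (∑ i ∈ range (2*k+1), (ζ^2) ^ i) * (ζ^2 - 1) = ((c:ℂ) * ζ^(2*k)) * (ζ^2 - 1) := by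
    rw [hgeom, hfact, e2, hζ2]
    have hcC : (c : ℂ) * (Real.sin θ : ℂ) = (Real.sin ((2*k+1)*θ) : ℂ) := by
      exact_mod_cast congrArg (Complex.ofReal) hc
    calc ζ^(2*k+1) * (2*I*(Real.sin ((2*k+1)*θ):ℂ))
        = ζ^(2*k+1) * (2*I) * ((c:ℂ) * (Real.sin θ:ℂ)) := by rw [hcC]; ring
      _ = (c:ℂ) * ζ^(2*k) * (ζ * (2*I*(Real.sin θ:ℂ))) := by rw [pow_succ]; ring
  have hS : (∑ i ∈ range (2*k+1), (ζ^2) ^ i) = (c:ℂ) * ζ^(2*k) :=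
    mul_right_cancel₀ hne key
  rw [hωl, hphase, hS, mul_assoc, mul_inv_cancel₀ (pow_ne_zero _ hζ0), mul_one]

end Aux

theorem central_multinomial_chebyshev_formula (k n : ℕ) (hk : 1 ≤ k) (hn : 1 ≤ n) :
    ((((∑ i ∈ Finset.range (2 * k + 1), (X : ℤ[X]) ^ i) ^ n).coeff (k * n) : ℝ)) =
      (1 / (2 * k * n + 1)) *
        ((2 * k + 1) ^ n +
          ∑ l ∈ Finset.Icc 1 (2 * k * n),
            ((Polynomial.Chebyshev.U ℝ (2 * k)).eval
                (Real.cos (l * Real.pi / (2 * k * n + 1)))) ^ n) := by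
  set N : ℕ := 2*k*n+1 with hNdef
  set ω : ℂ := Complex.exp (2 * Real.pi * Complex.I / N) with hω
  set q : ℂ[X] := (∑ i ∈ Finset.range (2 * k + 1), (X : ℂ[X]) ^ i) ^ n with hqdef
  have hN : 0 < N := Nat.succ_pos _
  -- coefficient cast
  have hmap : q = Polynomial.map (Int.castRingHom ℂ)
      ((∑ i ∈ Finset.range (2 * k + 1), (X : ℤ[X]) ^ i) ^ n) := by
    simp [hqdef, Polynomial.map_pow, Polynomial.map_sum]
  have hcoeff : q.coeff (k*n) =
      ((((∑ i ∈ Finset.range (2 * k + 1), (X : ℤ[X]) ^ i) ^ n).coeff (k * n) : ℤ) : ℂ) := by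
    rw [hmap, Polynomial.coeff_map]; simp
  -- degree bound
  have hdeg : q.natDegree < N := by
    have h1 : (∑ i ∈ Finset.range (2 * k + 1), (X : ℂ[X]) ^ i).natDegree ≤ 2*k := by
      apply Polynomial.natDegree_sum_le_of_forall_le
      intro i hi
      simpa [Polynomial.natDegree_X_pow] using Nat.lt_succ_iff.mp (Finset.mem_range.mp hi)
    calc q.natDegree ≤ n * (∑ i ∈ Finset.range (2 * k + 1), (X : ℂ[X]) ^ i).natDegree :=
          Polynomial.natDegree_pow_le
      _ ≤ n * (2*k) := Nat.mul_le_mul_left n h1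
      _ < N := Nat.lt_succ_of_le (le_of_eq (by ring))
  have hm : k*n < N := by nlinarith
  have hfour := fourier_coeff N hN q hdeg (k*n) hm
  -- split off l = 0
  rw [Finset.range_eq_Ico, Finset.sum_eq_sum_Ico_succ_bot hN] at hfour
  have hIco : Finset.Ico 1 N = Finset.Icc 1 (2*k*n) := Finset.Ico_add_one_right_eq_Icc ..
  rw [hIco] at hfour
  -- l = 0 term
  have h0 : q.eval (ω ^ 0) * ((ω ^ (k*n))⁻¹) ^ 0 = ((2*k+1 : ℕ) : ℂ) ^ n := by
    simp [hqdef, Polynomial.eval_finset_sum]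
  rw [h0] at hfour
  -- general terms
  have hterm : ∀ l ∈ Finset.Icc 1 (2*k*n),
      q.eval (ω ^ l) * ((ω ^ (k*n))⁻¹) ^ l =
        ((((Chebyshev.U ℝ (2*k)).eval (Real.cos (l * Real.pi / N)) : ℝ) : ℂ)) ^ n := by
    intro l hl
    obtain ⟨hl1, hl2⟩ := Finset.mem_Icc.mp hl
    have hlN : l < N := by omega
    have heval : q.eval (ω ^ l) = (∑ i ∈ range (2*k+1), (ω ^ l) ^ i) ^ n := by
      simp [hqdef, Polynomial.eval_finset_sum]
    have hphase : ((ω ^ (k*n))⁻¹) ^ l = (((ω ^ k)⁻¹) ^ l) ^ n := by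
      simp only [inv_pow, ← pow_mul]
      ring_nf
    rw [heval, hphase, ← mul_pow, dirichlet_eval N k l hl1 hlN]
  rw [Finset.sum_congr rfl hterm] at hfour
  -- pass to the reals
  have hfinR : (N : ℝ) * (((∑ i ∈ Finset.range (2 * k + 1), (X : ℤ[X]) ^ i) ^ n).coeff (k * n) : ℝ)
      = (2*k+1 : ℝ) ^ n + ∑ l ∈ Finset.Icc 1 (2*k*n),
          ((Chebyshev.U ℝ (2*k)).eval (Real.cos (l * Real.pi / N))) ^ n := by
    rw [hcoeff] at hfour
    apply Complex.ofReal_injective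
    push_cast [hNdef] at hfour ⊢
    convert hfour using 2
  have hNR : ((N:ℕ) : ℝ) = 2*(k:ℝ)*(n:ℝ)+1 := by push_cast [hNdef]; ring
  rw [hNR] at hfinR
  have hne : (2*(k:ℝ)*(n:ℝ)+1) ≠ 0 := by positivity
  rw [one_div, inv_mul_eq_div, eq_div_iff hne]
  linarith [hfinR]
end

section
/- Let k, n ≥ 1 be integers, N = 2kn+1, and let A be the N×N circulant boolean matrix with first row having 1's in positions 1 through k+1 and positions N-k+1 through N (1-indexed), and 0's elsewhere. Then the trace of A^n equals (2kn+1) times the coefficient of x^{kn} in (1 + x + x^2 + ... + x^{2k})^n. -/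
open Finset Polynomial Matrix

private lemma arith_key (N k x : ℕ) (hN : 2*k < N) (hx : x < N) :
    ((x + k) % N < 2*k+1) ↔ (x ≤ k ∨ N - k ≤ x) := by
  rcases Nat.lt_or_ge (x + k) N with h | h
  · rw [Nat.mod_eq_of_lt h]; omega
  · rw [Nat.mod_eq_sub_mod h, Nat.mod_eq_of_lt (by omega)]; omega

private lemma arith_main (N k a b : ℕ) (hN : 2*k < N) (ha : a < N) (hb : b < N) :
    (((N - b + a) % N + k) % N < 2*k+1) ↔
      ((b + N - a) % N ≤ k ∨ N - k ≤ (b + N - a) % N) := by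
  rcases lt_trichotomy a b with h | h | h
  · have h1 : (N - b + a) % N = N - b + a := Nat.mod_eq_of_lt (by omega)
    have h2 : (b + N - a) % N = b - a := by
      have hE : b + N - a = (b - a) + N := by omega
      rw [hE, Nat.add_mod_right, Nat.mod_eq_of_lt (by omega)]
    rw [h1, h2, arith_key N k _ hN (by omega)]
    omega
  · subst h
    have h1 : (N - a + a) % N = 0 := by
      rw [Nat.sub_add_cancel ha.le, Nat.mod_self]
    have h2 : (a + N - a) % N = 0 := by
      have hE : a + N - a = N := by omega
      rw [hE, Nat.mod_self]
    rw [h1, h2, arith_key N k 0 hN (by omega)]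
  · have h1 : (N - b + a) % N = a - b := by
      have hE : N - b + a = (a - b) + N := by omega
      rw [hE, Nat.add_mod_right, Nat.mod_eq_of_lt (by omega)]
    have h2 : (b + N - a) % N = b + N - a := Nat.mod_eq_of_lt (by omega)
    rw [h1, h2, arith_key N k _ hN (by omega)]
    omega

private lemma circ_coe_mul {m : ℕ} (g h : AddMonoidAlgebra ℤ (Fin (m+1))) :
    Matrix.circulant (⇑(g * h).coeff) = Matrix.circulant ⇑g.coeff * Matrix.circulant ⇑h.coeff := by
  have h0 : Matrix.circulant (⇑(g * (0 : AddMonoidAlgebra ℤ (Fin (m+1)))).coeff)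
      = Matrix.circulant ⇑g.coeff * Matrix.circulant ⇑(0 : AddMonoidAlgebra ℤ (Fin (m+1))).coeff := by
    rw [mul_zero]; simp [Matrix.circulant_zero]
  have hadd : ∀ p q : AddMonoidAlgebra ℤ (Fin (m+1)),
      Matrix.circulant (⇑(g * p).coeff) = Matrix.circulant ⇑g.coeff * Matrix.circulant ⇑p.coeff →
      Matrix.circulant (⇑(g * q).coeff) = Matrix.circulant ⇑g.coeff * Matrix.circulant ⇑q.coeff →
      Matrix.circulant (⇑(g * (p + q)).coeff)
        = Matrix.circulant ⇑g.coeff * Matrix.circulant ⇑(p + q).coeff := by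
    intro p q ih1 ih2
    rw [mul_add]
    have e1 : ⇑(g * p + g * q).coeff = ⇑(g * p).coeff + ⇑(g * q).coeff := rfl
    have e2 : ⇑(p + q).coeff = ⇑p.coeff + ⇑q.coeff := rfl
    rw [e1, e2, Matrix.circulant_add, Matrix.circulant_add, ih1, ih2, Matrix.mul_add]
  have hsingle : ∀ (a : Fin (m+1)) (b : ℤ),
      Matrix.circulant (⇑(g * AddMonoidAlgebra.single a b).coeff)
        = Matrix.circulant ⇑g.coeff * Matrix.circulant ⇑(AddMonoidAlgebra.single a b).coeff := by
    intro a b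
    rw [Matrix.circulant_mul]
    refine congrArg _ (funext fun x => ?_)
    show (g * AddMonoidAlgebra.single a b).coeff x
        = ∑ y, g.coeff (x - y) * (AddMonoidAlgebra.single a b).coeff y
    rw [AddMonoidAlgebra.coeff_mul_single_apply, ← sub_eq_add_neg]
    simp [AddMonoidAlgebra.coeff_single_apply, Finsupp.single_apply, mul_ite, Finset.sum_ite_eq]
  induction h using AddMonoidAlgebra.induction_linear with
  | zero => exact h0
  | add f₁ f₂ ih1 ih2 => exact hadd _ _ ih1 ih2
  | single a b => exact hsingle a b

private lemma circ_coe_one {m : ℕ} :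
    Matrix.circulant (⇑(1 : AddMonoidAlgebra ℤ (Fin (m+1))).coeff) = 1 := by
  have e : ⇑(1 : AddMonoidAlgebra ℤ (Fin (m+1))).coeff = Pi.single 0 1 := by
    rw [AddMonoidAlgebra.one_def, AddMonoidAlgebra.coeff_single, Finsupp.single_eq_pi_single]
  rw [e, Matrix.circulant_single_one]

private lemma circ_coe_pow {m : ℕ} (g : AddMonoidAlgebra ℤ (Fin (m+1))) (j : ℕ) :
    Matrix.circulant (⇑(g ^ j).coeff) = Matrix.circulant ⇑g.coeff ^ j := by
  induction j with
  | zero => simpa using circ_coe_one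
  | succ j ih => rw [pow_succ, pow_succ, circ_coe_mul, ih]

private lemma circ_trace {m : ℕ} (v : Fin (m+1) → ℤ) :
    Matrix.trace (Matrix.circulant v) = ((m+1 : ℕ) : ℤ) * v 0 := by
  simp only [Matrix.trace, Matrix.diag, Matrix.circulant_apply, sub_self]
  rw [Finset.sum_const, Finset.card_univ, Fintype.card_fin, nsmul_eq_mul]

open Fin.CommRing in
theorem trace_formula_central_multinomial (k n : ℕ) (hk : 1 ≤ k) (hn : 1 ≤ n)
    (N : ℕ) (hN : N = 2 * k * n + 1)
    (A : Matrix (Fin N) (Fin N) ℤ)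
    (hA : ∀ i j : Fin N,
      A i j = if ((j : ℕ) + N - (i : ℕ)) % N ≤ k ∨ N - k ≤ ((j : ℕ) + N - (i : ℕ)) % N
        then 1 else 0) :
    Matrix.trace (A ^ n) =
      (2 * k * n + 1) * ((∑ i ∈ Finset.range (2 * k + 1), (X : ℤ[X]) ^ i) ^ n).coeff (k * n) := by
  subst hN
  have hkN : 2 * k < 2*k*n+1 := by nlinarith
  have hkn : k * n < 2*k*n+1 := by nlinarith
  set f : ℤ[X] := ∑ i ∈ Finset.range (2 * k + 1), (X : ℤ[X]) ^ i with hf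
  let ψ : ℤ[X] →+* AddMonoidAlgebra ℤ (Fin (2*k*n+1)) :=
    (AddMonoidAlgebra.mapDomainRingHom ℤ (Nat.castRingHom (Fin (2*k*n+1)))).comp
      (Polynomial.toFinsuppIso ℤ).toRingHom
  have hψ : ∀ p : ℤ[X], p.natDegree < 2*k*n+1 → ∀ d : Fin (2*k*n+1),
      (ψ p).coeff d = p.coeff d.val := by
    intro p hp d
    have e : (ψ p).coeff = Finsupp.mapDomain (Nat.cast : ℕ → Fin (2*k*n+1)) p.toFinsupp.coeff := by
      simp [ψ, Polynomial.toFinsuppIso_apply]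
    rw [e]
    conv_lhs => rw [show d = ((d.val : ℕ) : Fin (2*k*n+1)) from (Fin.cast_val_eq_self d).symm]
    rw [Finsupp.mapDomain_apply' {i | i < 2*k*n+1} _ ?_ ?_ (by exact d.isLt)]
    · exact p.toFinsupp_apply d.val
    · intro i hi
      simp only [Finset.mem_coe, Finsupp.mem_support_iff, Polynomial.toFinsupp_apply] at hi
      exact Set.mem_setOf.2 (lt_of_le_of_lt (Polynomial.le_natDegree_of_ne_zero hi) hp)
    · intro i hi j hj hij
      have := congrArg Fin.val hij
      rwa [Fin.val_cast_of_lt hi, Fin.val_cast_of_lt hj] at this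
  have hfdeg : f.natDegree ≤ 2*k := by
    apply Polynomial.natDegree_sum_le_of_forall_le
    intro i hi
    simp only [Finset.mem_range] at hi
    simpa [Polynomial.natDegree_X_pow] using Nat.lt_succ_iff.mp hi
  have hfdeg' : f.natDegree < 2*k*n+1 := lt_of_le_of_lt hfdeg hkN
  have hfn_deg : (f ^ n).natDegree < 2*k*n+1 := by
    have h1 : (f ^ n).natDegree ≤ n * (2*k) :=
      le_trans (Polynomial.natDegree_pow_le) (Nat.mul_le_mul_left n hfdeg)
    nlinarith
  have hcoeff : ∀ t : ℕ, f.coeff t = if t < 2*k+1 then 1 else 0 := by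
    intro t
    rw [hf]
    simp [Polynomial.finset_sum_coeff, Polynomial.coeff_X_pow, Finset.sum_ite_eq]
  have hAc : A = Matrix.circulant
      ⇑(ψ f * AddMonoidAlgebra.single (-(k : Fin (2*k*n+1))) (1:ℤ)).coeff := by
    ext i j
    rw [hA i j, Matrix.circulant_apply, AddMonoidAlgebra.coeff_mul_single_apply, mul_one,
      neg_neg, hψ f hfdeg' _, hcoeff]
    have hval : (i - j + (k : Fin (2*k*n+1))).val
        = ((2*k*n+1 - j.val + i.val) % (2*k*n+1) + k) % (2*k*n+1) := by
      simp [Fin.add_def, Fin.sub_def, Fin.val_cast_of_lt (show k < 2*k*n+1 by omega)]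
    rw [hval]
    simp only [arith_main (2*k*n+1) k i.val j.val hkN i.isLt j.isLt]
  calc Matrix.trace (A ^ n)
      = Matrix.trace (Matrix.circulant
          ⇑((ψ f * AddMonoidAlgebra.single (-(k : Fin (2*k*n+1))) (1:ℤ)) ^ n).coeff) := by
        rw [hAc, circ_coe_pow]
    _ = ((2*k*n+1 : ℕ) : ℤ)
          * ((ψ f * AddMonoidAlgebra.single (-(k : Fin (2*k*n+1))) (1:ℤ)) ^ n).coeff 0 :=
        circ_trace _
    _ = ((2*k*n+1 : ℕ) : ℤ) * (f ^ n).coeff (k * n) := by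
        congr 1
        rw [mul_pow, AddMonoidAlgebra.single_pow, one_pow,
          AddMonoidAlgebra.coeff_mul_single_apply, mul_one, ← map_pow ψ f n]
        rw [hψ (f ^ n) hfn_deg _]
        congr 1
        have e : (0 : Fin (2*k*n+1)) - n • (-(k : Fin (2*k*n+1)))
            = ((k * n : ℕ) : Fin (2*k*n+1)) := by
          push_cast
          rw [nsmul_eq_mul]
          ring
        rw [← sub_eq_add_neg, e, Fin.val_cast_of_lt hkn]
    _ = (2 * k * n + 1) * ((∑ i ∈ Finset.range (2 * k + 1), (X : ℤ[X]) ^ i) ^ n).coeff (k * n) := by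
        rw [← hf]
        push_cast
        ring
end

section
/- For every integer n ≥ 1, (2n+1) divides 3^n + Σ_{l=1}^{2n} (1 + 2cos(2lπ/(2n+1)))^n, and the quotient is the central trinomial coefficient T(n). -/
open Real Finset Polynomial

theorem trinomial_divisibility (n : ℕ) (hn : 1 ≤ n) :
    3 ^ n + ∑ l ∈ Finset.Icc 1 (2 * n),
        (1 + 2 * Real.cos (2 * l * Real.pi / (2 * n + 1))) ^ n =
      (2 * n + 1) * (((1 + X + X ^ 2 : ℤ[X]) ^ n).coeff n : ℝ) := by
  have hmne : (2*n+1 : ℕ) ≠ 0 := by omega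
  set m : ℕ := 2*n+1 with hm
  have hm0 : ((m : ℕ) : ℂ) ≠ 0 := Nat.cast_ne_zero.mpr hmne
  have hm1 : m - 1 = 2*n := by omega
  have hm0' : (2*(n:ℂ)+1) ≠ 0 := by
    have := hm0; rw [hm] at this; push_cast at this; exact this
  set ω : ℂ := Complex.exp (2 * Real.pi * Complex.I / m) with hω
  have hprim : IsPrimitiveRoot ω m := Complex.isPrimitiveRoot_exp m hmne
  have hω1 : ω ^ m = 1 := hprim.pow_eq_one
  have hωne : ω ≠ 0 := Complex.exp_ne_zero _
  set c : ℕ → ℤ := fun k => ((1+X+X^2 : ℤ[X])^n).coeff k with hc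
  -- polynomial expansion
  have hexp : ∀ x : ℂ, (1 + x + x^2)^n = ∑ k ∈ range m, (c k : ℂ) * x^k := by
    intro x
    have hdeg : (((1+X+X^2 : ℤ[X])^n).map (Int.castRingHom ℂ)).natDegree < m := by
      refine lt_of_le_of_lt (Polynomial.natDegree_map_le) ?_
      refine lt_of_le_of_lt (Polynomial.natDegree_pow_le) ?_
      have h2 : (1+X+X^2 : ℤ[X]).natDegree ≤ 2 := by compute_degree
      calc n * (1+X+X^2 : ℤ[X]).natDegree ≤ n * 2 := Nat.mul_le_mul_left n h2
        _ < m := by omega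
    have h := Polynomial.eval_eq_sum_range' hdeg x
    have hL : Polynomial.eval x (((1+X+X^2 : ℤ[X])^n).map (Int.castRingHom ℂ))
        = (1 + x + x^2)^n := by
      simp [Polynomial.map_pow, Polynomial.map_add]
    have hR : ∀ i : ℕ, (((1+X+X^2 : ℤ[X])^n).map (Int.castRingHom ℂ)).coeff i
        = ((c i : ℤ) : ℂ) := fun i => by
      rw [Polynomial.coeff_map, hc]
      simp
    rw [hL] at h
    rw [h]
    exact Finset.sum_congr rfl fun i _ => by rw [hR]
  -- geometric sums
  have hgeom : ∀ k ∈ range m, (∑ l ∈ range m, (ω^((m-1)*n+k))^l) = if k = n then (m:ℂ) else 0 := by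
    intro k hk
    simp only [mem_range] at hk
    by_cases hkn : k = n
    · have he : (m-1)*n+k = m*n := by rw [hkn, hm1, hm]; ring
      rw [he, pow_mul, hω1, one_pow, if_pos hkn]
      simp
    · rw [if_neg hkn]
      have hζ : ω^((m-1)*n+k) ≠ 1 := by
        intro h1
        rw [hprim.pow_eq_one_iff_dvd] at h1
        obtain ⟨e, he⟩ := h1
        rw [hm1, hm] at he
        have hk' : k ≤ 2*n := by omega
        have hlt : e < n + 1 := by
          by_contra hcon
          push_neg at hcon
          have := Nat.mul_le_mul_left (2*n+1) hcon
          nlinarith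
        have hge : n ≤ e := by
          by_contra hcon
          push_neg at hcon
          have := Nat.mul_le_mul_left (2*n+1) (show e+1 ≤ n from hcon)
          nlinarith
        have hen : e = n := by omega
        rw [hen] at he
        have hx : (2*n+1)*n = 2*n*n + n := by ring
        omega
      rw [geom_sum_eq hζ]
      have h2 : (ω^((m-1)*n+k))^m = 1 := by
        rw [← pow_mul, mul_comm, pow_mul, hω1, one_pow]
      rw [h2]
      simp
  -- per-term identity
  have hterm : ∀ l ∈ Icc 1 (2*n),
      (1 + 2 * Complex.cos (2 * (l:ℂ) * (π:ℂ) / (2 * (n:ℂ) + 1))) ^ n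
        = ω^((m-1)*l*n) * (1 + ω^l + (ω^l)^2)^n := by
    intro l hl
    have hωl : ω^l = Complex.exp ((2 * (l:ℂ) * (π:ℂ) / (2 * (n:ℂ) + 1)) * Complex.I) := by
      rw [hω, ← Complex.exp_nat_mul]
      congr 1
      rw [hm]
      push_cast
      field_simp
    have hinv : ω^((m-1)*l) = (ω^l)⁻¹ := by
      refine eq_inv_of_mul_eq_one_left ?_
      rw [← pow_add]
      have h3 : (m-1)*l + l = m*l := by rw [hm1, hm]; ring
      rw [h3, pow_mul, hω1, one_pow]
    have hcos : 1 + 2 * Complex.cos (2 * (l:ℂ) * (π:ℂ) / (2 * (n:ℂ) + 1))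
        = 1 + ω^l + (ω^l)⁻¹ := by
      rw [Complex.cos, hωl, ← Complex.exp_neg]
      ring
    have hfac : 1 + ω^l + (ω^l)⁻¹ = ω^((m-1)*l) * (1 + ω^l + (ω^l)^2) := by
      rw [hinv]
      field_simp
      ring
    rw [hcos, hfac, mul_pow, ← pow_mul]
  -- main computation
  rw [← Complex.ofReal_inj]
  push_cast
  rw [Finset.sum_congr rfl hterm]
  have hsplit : (range m) = insert 0 (Icc 1 (2*n)) := by
    ext x; simp [hm]; omega
  have hmain : (3:ℂ)^n + ∑ l ∈ Icc 1 (2*n), ω^((m-1)*l*n) * (1 + ω^l + (ω^l)^2)^n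
      = ∑ l ∈ range m, ω^((m-1)*l*n) * (1 + ω^l + (ω^l)^2)^n := by
    rw [hsplit, Finset.sum_insert (by simp)]
    norm_num
  rw [hmain]
  have hcalc : ∑ l ∈ range m, ω^((m-1)*l*n) * (1 + ω^l + (ω^l)^2)^n
      = ((2*n : ℕ) + 1 : ℂ) * (c n : ℂ) := by
    calc ∑ l ∈ range m, ω^((m-1)*l*n) * (1 + ω^l + (ω^l)^2)^n
        = ∑ l ∈ range m, ∑ k ∈ range m, (c k : ℂ) * (ω^((m-1)*n+k))^l := by
          refine Finset.sum_congr rfl fun l _ => ?_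
          rw [hexp (ω^l), Finset.mul_sum]
          refine Finset.sum_congr rfl fun k _ => ?_
          have hpow : ω^((m-1)*l*n) * (ω^l)^k = (ω^((m-1)*n+k))^l := by
            rw [← pow_mul, ← pow_mul, ← pow_add]
            congr 1
            ring
          rw [← hpow]
          ring
      _ = ∑ k ∈ range m, (c k : ℂ) * ∑ l ∈ range m, (ω^((m-1)*n+k))^l := by
          rw [Finset.sum_comm]
          exact Finset.sum_congr rfl fun k _ => by rw [Finset.mul_sum]
      _ = ∑ k ∈ range m, (c k : ℂ) * (if k = n then (m:ℂ) else 0) := by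
          exact Finset.sum_congr rfl fun k hk => by rw [hgeom k hk]
      _ = (c n : ℂ) * m := by
          rw [Finset.sum_eq_single n]
          · simp
          · intro k _ hkn; simp [hkn]
          · intro h; exact absurd (by simp [hm]; omega : n ∈ range m) h
      _ = ((2*n : ℕ) + 1 : ℂ) * (c n : ℂ) := by rw [hm]; push_cast; ring
  rw [hcalc]
  push_cast
  ring
end

section
/- For every integer n ≥ 1, Σ_{l=1}^{2n} (1 + 2cos(2lπ/(2n+1)))^n = (2n+1)·T(n) − 3^n, where T(n) is the central trinomial coefficient; in particular this trigonometric sum is always an integer. -/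
open Real Finset Polynomial

theorem trinomial_trig_sum_integer (n : ℕ) (hn : 1 ≤ n) :
    (∑ l ∈ Finset.Icc 1 (2 * n), (1 + 2 * Real.cos (2 * l * Real.pi / (2 * n + 1))) ^ n =
        (2 * n + 1) * (((1 + X + X ^ 2 : ℤ[X]) ^ n).coeff n : ℝ) - 3 ^ n) ∧
      ∃ z : ℤ,
        ∑ l ∈ Finset.Icc 1 (2 * n), (1 + 2 * Real.cos (2 * l * Real.pi / (2 * n + 1))) ^ n =
          (z : ℝ) := by
  set m : ℕ := 2 * n + 1 with hm
  have hm0 : m ≠ 0 := by omega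
  have hm0C : (m : ℂ) ≠ 0 := Nat.cast_ne_zero.mpr hm0
  set ζ : ℂ := Complex.exp (2 * Real.pi * Complex.I / m) with hζ
  have hprim : IsPrimitiveRoot ζ m := Complex.isPrimitiveRoot_exp m hm0
  have hζ0 : ζ ≠ 0 := Complex.exp_ne_zero _
  set c : ℕ → ℤ := fun k => ((1 + X + X ^ 2 : ℤ[X]) ^ n).coeff k with hc
  have hmC : (m : ℂ) = 2 * (n : ℂ) + 1 := by push_cast [hm]; ring
  -- per-term complex identity
  have key : ∀ l : ℕ, ((1 + 2 * Real.cos (2 * l * Real.pi / (2 * n + 1)) : ℝ) : ℂ) ^ n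
      = ∑ k ∈ range (2 * n + 1), (c k : ℂ) * ζ ^ (((k : ℤ) - n) * l) := by
    intro l
    have e1 : Complex.exp ((2 * (l : ℂ) * π / (2 * (n : ℂ) + 1)) * Complex.I) = ζ ^ l := by
      rw [hζ, ← Complex.exp_nat_mul]
      congr 1
      rw [hmC]
      have h1 : (2 * (n : ℂ) + 1) ≠ 0 := by rw [← hmC]; exact hm0C
      field_simp
    have e2 : Complex.exp (-((2 * (l : ℂ) * π / (2 * (n : ℂ) + 1)) * Complex.I)) = ζ ^ (-(l : ℤ)) := by
      rw [Complex.exp_neg, e1, zpow_neg, zpow_natCast]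
    have hcos : ((1 + 2 * Real.cos (2 * l * Real.pi / (2 * n + 1)) : ℝ) : ℂ)
        = 1 + ζ ^ l + ζ ^ (-(l : ℤ)) := by
      push_cast
      rw [Complex.two_cos, neg_mul, e1, e2]
      ring
    rw [hcos]
    -- polynomial evaluation
    have hdeg : ((1 + X + X ^ 2 : ℂ[X]) ^ n).natDegree < 2 * n + 1 := by
      have : ((1 + X + X ^ 2 : ℂ[X]) ^ n).natDegree ≤ n * 2 := by
        apply (Polynomial.natDegree_pow_le).trans
        apply Nat.mul_le_mul_left
        apply Polynomial.natDegree_add_le_of_degree_le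
        · apply Polynomial.natDegree_add_le_of_degree_le
          · simp
          · simp
        · simp
      omega
    have hmap : ((1 + X + X ^ 2 : ℤ[X]) ^ n).map (Int.castRingHom ℂ) = (1 + X + X ^ 2 : ℂ[X]) ^ n := by
      simp [Polynomial.map_pow]
    have hev : (1 + ζ ^ l + (ζ ^ l) ^ 2) ^ n
        = ∑ k ∈ range (2 * n + 1), (c k : ℂ) * (ζ ^ l) ^ k := by
      have := Polynomial.eval_eq_sum_range' hdeg (ζ ^ l)
      simp only [Polynomial.eval_pow, Polynomial.eval_add, Polynomial.eval_one,
        Polynomial.eval_X] at this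
      rw [this]
      apply Finset.sum_congr rfl
      intro k _
      congr 1
      rw [← hmap, Polynomial.coeff_map]
      simp [hc]
    have hfac : 1 + ζ ^ l + ζ ^ (-(l : ℤ)) = ζ ^ (-(l : ℤ)) * (1 + ζ ^ l + (ζ ^ l) ^ 2) := by
      rw [zpow_neg, zpow_natCast]
      have hζl : ζ ^ l ≠ 0 := pow_ne_zero _ hζ0
      field_simp
      ring
    rw [hfac, mul_pow, hev, Finset.mul_sum]
    apply Finset.sum_congr rfl
    intro k _
    rw [← zpow_natCast ζ l, ← zpow_natCast (ζ ^ (l:ℤ)) k, ← zpow_mul, ← zpow_natCast (ζ ^ (-(l:ℤ))) n,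
      ← zpow_mul, mul_left_comm, ← zpow_add₀ hζ0]
    congr 2
    ring
  -- sum over all l in range m
  have inner : ∀ k ∈ range (2 * n + 1),
      ∑ l ∈ range m, ζ ^ (((k : ℤ) - n) * l) = if k = n then (m : ℂ) else 0 := by
    intro k hk
    simp only [Finset.mem_range] at hk
    have hrw : ∀ l : ℕ, ζ ^ (((k : ℤ) - n) * l) = (ζ ^ ((k : ℤ) - n)) ^ l := by
      intro l
      rw [← zpow_natCast (ζ ^ ((k:ℤ) - n)) l, ← zpow_mul]
    simp_rw [hrw]
    by_cases hkn : k = n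
    · subst hkn
      simp
    · rw [if_neg hkn]
      have hne1 : ζ ^ ((k : ℤ) - n) ≠ 1 := by
        rw [Ne, hprim.zpow_eq_one_iff_dvd]
        intro hdvd
        have h0 : ((k : ℤ) - n) = 0 :=
          Int.eq_zero_of_dvd_of_natAbs_lt_natAbs hdvd (by simp [hm]; omega)
        omega
      rw [geom_sum_eq hne1]
      have : (ζ ^ ((k : ℤ) - n)) ^ m = 1 := by
        rw [← zpow_natCast (ζ ^ ((k:ℤ) - n)) m, ← zpow_mul, mul_comm, zpow_mul, zpow_natCast,
          hprim.pow_eq_one, one_zpow]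
      rw [this]
      simp
  have sum_all : ∑ l ∈ range m, ((1 + 2 * Real.cos (2 * l * Real.pi / (2 * n + 1)) : ℝ) : ℂ) ^ n
      = (m : ℂ) * (c n : ℂ) := by
    simp_rw [key]
    rw [Finset.sum_comm]
    rw [Finset.sum_congr rfl fun k hk => by rw [← Finset.mul_sum, inner k hk]]
    rw [Finset.sum_eq_single n]
    · simp [mul_comm]
    · intro b _ hb; simp [hb]
    · intro hmem; exfalso; apply hmem; simp only [Finset.mem_range]; omega
  -- split off l = 0
  have hsplit : (range m) = insert 0 (Finset.Icc 1 (2 * n)) := by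
    ext x
    simp only [Finset.mem_range, Finset.mem_insert, Finset.mem_Icc, hm]
    omega
  have h0 : ((1 + 2 * Real.cos (2 * (0:ℕ) * Real.pi / (2 * n + 1)) : ℝ) : ℂ) ^ n = 3 ^ n := by
    norm_num
  have sum_icc : ∑ l ∈ Finset.Icc 1 (2 * n),
      ((1 + 2 * Real.cos (2 * l * Real.pi / (2 * n + 1)) : ℝ) : ℂ) ^ n
      = (m : ℂ) * (c n : ℂ) - 3 ^ n := by
    rw [← sum_all, hsplit, Finset.sum_insert (by simp)]
    rw [h0]
    ring
  have hreal : ∑ l ∈ Finset.Icc 1 (2 * n), (1 + 2 * Real.cos (2 * l * Real.pi / (2 * n + 1))) ^ n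
      = (2 * n + 1) * ((c n : ℤ) : ℝ) - 3 ^ n := by
    apply Complex.ofReal_injective
    rw [Complex.ofReal_sum]
    simp only [Complex.ofReal_pow]
    rw [sum_icc, hmC]
    push_cast
    ring
  constructor
  · exact hreal
  · exact ⟨(2 * n + 1) * c n - 3 ^ n, by rw [hreal]; push_cast; ring⟩
end
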